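/- Let X be a locally finite Helly graph, let g be an automorphism of X, and suppose there exist integers a ≥ 1, L ≥ 1 and a vertex x of X such that d(x, g^{an}·x) = nL for every n ∈ ℕ. Then there exists a bi-infinite L-clique-path (σ_n)_{n ∈ ℤ} in X such that g^a · σ_n = σ_{n+1} for every n ∈ ℤ. -/

import Mathlib

open SimpleGraph Pointwise

/-- A Helly graph: a connected simple graph in which every family of pairwise
intersecting combinatorial balls has a common point. -/
def IsHellyGraph {V : Type*} (Γ : SimpleGraph V) : Prop :=
  Γ.Connected ∧
  ∀ S : Set (V × ℕ),
    (∀ p ∈ S, ∀ q ∈ S, ∃ y : V, Γ.dist p.1 y ≤ p.2 ∧ Γ.dist q.1 y ≤ q.2) →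
    ∃ y : V, ∀ p ∈ S, Γ.dist p.1 y ≤ p.2

/-- Transverse distance `σ ≷ τ = n` between two cliques. -/
def TransDist {V : Type*} (Γ : SimpleGraph V) (σ τ : Set V) (n : ℕ) : Prop :=
  (∀ x ∈ σ, ∀ y ∈ τ, n ≤ Γ.dist x y) ∧
  (∃ x ∈ σ, ∀ y ∈ τ, Γ.dist x y = n) ∧
  (∃ y ∈ τ, ∀ x ∈ σ, Γ.dist x y = n)

/-- `σ 0, …, σ n` is an `L`-clique-path. -/
def IsCliquePath {V : Type*} (Γ : SimpleGraph V) (L n : ℕ) (σ : ℕ → Set V) : Prop :=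
  (∀ i ≤ n, Γ.IsClique (σ i) ∧ (σ i).Nonempty) ∧
  (∀ i ≤ n, ∀ j ≤ n, i ≠ j → Disjoint (σ i) (σ j)) ∧
  (∀ i j : ℕ, i < j → j ≤ n → TransDist Γ (σ i) (σ j) ((j - i) * L)) ∧
  (∀ i : ℕ, 1 ≤ i → i + 1 ≤ n →
    ∀ ρ : Set V, Γ.IsClique ρ → σ i ⊆ ρ →
      TransDist Γ ρ (σ (i - 1)) L → TransDist Γ ρ (σ (i + 1)) L → ρ = σ i)

/-- `σ 0, …, σ n` is a local `L`-clique-path: any three consecutive terms form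
an `L`-clique-path. -/
def IsLocalCliquePath {V : Type*} (Γ : SimpleGraph V) (L n : ℕ) (σ : ℕ → Set V) : Prop :=
  ∀ i : ℕ, i + 2 ≤ n → IsCliquePath Γ L 2 (fun k => σ (i + k))

/-- A bi-infinite `L`-clique-path. -/
def IsCliquePathZ {V : Type*} (Γ : SimpleGraph V) (L : ℕ) (σ : ℤ → Set V) : Prop :=
  (∀ n : ℤ, Γ.IsClique (σ n) ∧ (σ n).Nonempty) ∧
  (∀ n m : ℤ, n ≠ m → Disjoint (σ n) (σ m)) ∧
  (∀ n m : ℤ, n ≠ m → TransDist Γ (σ n) (σ m) ((n - m).natAbs * L)) ∧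
  (∀ n : ℤ, ∀ ρ : Set V, Γ.IsClique ρ → σ n ⊆ ρ →
    TransDist Γ ρ (σ (n - 1)) L → TransDist Γ ρ (σ (n + 1)) L → ρ = σ n)

/-- A bi-infinite local `L`-clique-path. -/
def IsLocalCliquePathZ {V : Type*} (Γ : SimpleGraph V) (L : ℕ) (σ : ℤ → Set V) : Prop :=
  ∀ n : ℤ, IsCliquePath Γ L 2 (fun k : ℕ => σ (n + k))

/-!
Call a clique `C` axial for `φ` if every translate `φ ^ n '' C` (`n ≥ 1`) lies at transverse
distance `n * L` from `C`. The hypothesis on `x` says that `{x}` is axial, and local finiteness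
leaves only finitely many cliques through `x`, so some axial clique `C ∋ x` is maximal. The
`ℤ`-orbit of `C` is the required clique-path: its transverse distances are those of `C` moved by
the isometries `φ ^ k`, and a clique `ρ ⊇ C` at transverse distance `L` from both `φ⁻¹ '' C` and
`φ '' C` is again axial, since the two vertices of `C` realising these distances also realise
all longer ones by the triangle inequality along the orbit; maximality then forces `ρ = C`.
-/

namespace SimpleGraph

variable {V W : Type*} {G : SimpleGraph V} {G' : SimpleGraph W}

theorem Iso.dist_le (φ : G ≃g G') (u v : V) : G'.dist (φ u) (φ v) ≤ G.dist u v := by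
  by_cases h : G.Reachable u v
  · obtain ⟨p, hp⟩ := h.exists_walk_length_eq_dist
    simpa [hp] using SimpleGraph.dist_le (p.map φ.toHom)
  · simp [dist_eq_zero_of_not_reachable, Iso.reachable_iff, h]

@[simp]
theorem Iso.dist_eq (φ : G ≃g G') (u v : V) : G'.dist (φ u) (φ v) = G.dist u v :=
  le_antisymm (φ.dist_le u v) (by simpa using φ.symm.dist_le (φ u) (φ v))

theorem IsClique.image_iso {s : Set V} (h : G.IsClique s) (φ : G ≃g G') :
    G'.IsClique (φ '' s) := by
  rintro _ ⟨u, hu, rfl⟩ _ ⟨v, hv, rfl⟩ hne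
  exact φ.map_adj_iff.mpr (h hu hv (ne_of_apply_ne φ hne))

theorem finite_setOf_isClique_mem {x : V} (hx : (G.neighborSet x).Finite) :
    {C : Set V | x ∈ C ∧ G.IsClique C}.Finite := by
  refine (hx.insert x).finite_subsets.subset ?_
  rintro C ⟨hxC, hC⟩ y hy
  by_cases hyx : y = x
  · exact hyx ▸ Set.mem_insert y _
  · exact Set.mem_insert_of_mem x (hC hy hxC hyx).symm

end SimpleGraph

namespace TransDist

variable {V W : Type*} {G : SimpleGraph V} {G' : SimpleGraph W} {σ τ : Set V} {n : ℕ}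

theorem symm (h : TransDist G σ τ n) : TransDist G τ σ n := by
  obtain ⟨hle, ⟨x, hx, hxτ⟩, ⟨y, hy, hyσ⟩⟩ := h
  refine ⟨fun y hy x hx => G.dist_comm ▸ hle x hx y hy, ⟨y, hy, fun x hx => ?_⟩,
    ⟨x, hx, fun y hy => ?_⟩⟩
  · rw [G.dist_comm, hyσ x hx]
  · rw [G.dist_comm, hxτ y hy]

theorem image (h : TransDist G σ τ n) (φ : G ≃g G') : TransDist G' (φ '' σ) (φ '' τ) n := by
  obtain ⟨hle, ⟨x, hx, hxτ⟩, ⟨y, hy, hyσ⟩⟩ := h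
  refine ⟨?_, ⟨φ x, ⟨x, hx, rfl⟩, ?_⟩, ⟨φ y, ⟨y, hy, rfl⟩, ?_⟩⟩
  · rintro _ ⟨u, hu, rfl⟩ _ ⟨v, hv, rfl⟩
    simpa using hle u hu v hv
  · rintro _ ⟨v, hv, rfl⟩
    simpa using hxτ v hv
  · rintro _ ⟨u, hu, rfl⟩
    simpa using hyσ u hu

theorem disjoint (h : TransDist G σ τ n) (hn : 0 < n) : Disjoint σ τ :=
  Set.disjoint_left.mpr fun x hσ hτ => by simpa using (h.1 x hσ x hτ).trans_lt' hn

end TransDist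

theorem RelIso.coe_pow {α : Type*} {r : α → α → Prop} (e : r ≃r r) (n : ℕ) :
    ⇑(e ^ n) = ⇑(e.toEquiv ^ n) := by
  induction n with
  | zero => rfl
  | succ n ih => rw [pow_succ, pow_succ, RelIso.coe_mul, Equiv.Perm.coe_mul, ih]; rfl

section AxialClique

variable {V : Type*} {Γ : SimpleGraph V} {φ : Γ ≃g Γ} {L : ℕ}

theorem image_zpow_image (φ : Γ ≃g Γ) (j k : ℤ) (s : Set V) :
    (φ ^ j) '' ((φ ^ k) '' s) = (φ ^ (j + k)) '' s := by
  rw [← Set.image_comp, ← RelIso.coe_mul, ← zpow_add]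

def IsAxialClique (Γ : SimpleGraph V) (φ : Γ ≃g Γ) (L : ℕ) (C : Set V) : Prop :=
  Γ.IsClique C ∧ C.Nonempty ∧ ∀ n : ℕ, 0 < n → TransDist Γ C ((φ ^ n) '' C) (n * L)

theorem isAxialClique_singleton {x : V} (hx : ∀ n : ℕ, Γ.dist x ((φ ^ n) x) = n * L) :
    IsAxialClique Γ φ L {x} :=
  ⟨Γ.isClique_singleton x, Set.singleton_nonempty x, fun n _ => by
    simp [TransDist, Set.image_singleton, hx]⟩

theorem dist_pow_succ_le_of_dist_apply_eq (hconn : Γ.Connected) {ρ : Set V} {z : V}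
    (hz : z ∈ ρ) (h : ∀ v ∈ ρ, Γ.dist z (φ v) = L) (n : ℕ) {v : V} (hv : v ∈ ρ) :
    Γ.dist z ((φ ^ (n + 1)) v) ≤ (n + 1) * L := by
  induction n with
  | zero => simp [h v hv]
  | succ n ih =>
    calc Γ.dist z ((φ ^ (n + 2)) v)
        ≤ Γ.dist z (φ z) + Γ.dist (φ z) ((φ ^ (n + 2)) v) := hconn.dist_triangle
      _ = L + Γ.dist z ((φ ^ (n + 1)) v) := by
        rw [h z hz, pow_succ' φ (n + 1), RelIso.mul_apply, SimpleGraph.Iso.dist_eq]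
      _ ≤ (n + 1 + 1) * L := by linarith

theorem dist_le_pow_succ_of_dist_apply_eq (hconn : Γ.Connected) {ρ : Set V} {z : V}
    (hz : z ∈ ρ) (h : ∀ v ∈ ρ, Γ.dist v (φ z) = L) (n : ℕ) {v : V} (hv : v ∈ ρ) :
    Γ.dist v ((φ ^ (n + 1)) z) ≤ (n + 1) * L := by
  induction n generalizing v with
  | zero => simp [h v hv]
  | succ n ih =>
    calc Γ.dist v ((φ ^ (n + 2)) z)
        ≤ Γ.dist v (φ z) + Γ.dist (φ z) ((φ ^ (n + 2)) z) := hconn.dist_triangle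
      _ = L + Γ.dist z ((φ ^ (n + 1)) z) := by
        rw [h v hv, pow_succ' φ (n + 1), RelIso.mul_apply, SimpleGraph.Iso.dist_eq]
      _ ≤ (n + 1 + 1) * L := by linarith [ih hz]

theorem IsAxialClique.le_dist_pow (hconn : Γ.Connected) {C ρ : Set V}
    (hC : IsAxialClique Γ φ L C) {zm zp : V} (hzm : zm ∈ C) (hzp : zp ∈ C)
    (hm : ∀ v ∈ ρ, Γ.dist zm (φ v) = L) (hp : ∀ v ∈ ρ, Γ.dist v (φ zp) = L)
    (n : ℕ) {v v' : V} (hv : v ∈ ρ) (hv' : v' ∈ ρ) :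
    n * L ≤ Γ.dist v ((φ ^ n) v') := by
  have hfar : (n + 2) * L ≤ Γ.dist zm ((φ ^ (n + 2)) zp) :=
    (hC.2.2 (n + 2) (by omega)).1 zm hzm _ ⟨zp, hzp, rfl⟩
  have hmid : Γ.dist (φ v) ((φ ^ (n + 1)) v') = Γ.dist v ((φ ^ n) v') := by
    rw [pow_succ', RelIso.mul_apply, SimpleGraph.Iso.dist_eq]
  have hlast : Γ.dist ((φ ^ (n + 1)) v') ((φ ^ (n + 2)) zp) = L := by
    rw [pow_succ φ (n + 1), RelIso.mul_apply, SimpleGraph.Iso.dist_eq, hp v' hv']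
  have hpath : Γ.dist zm ((φ ^ (n + 2)) zp) ≤ L + Γ.dist v ((φ ^ n) v') + L :=
    calc Γ.dist zm ((φ ^ (n + 2)) zp)
        ≤ Γ.dist zm (φ v) + Γ.dist (φ v) ((φ ^ (n + 2)) zp) := hconn.dist_triangle
      _ ≤ Γ.dist zm (φ v) + (Γ.dist (φ v) ((φ ^ (n + 1)) v')
          + Γ.dist ((φ ^ (n + 1)) v') ((φ ^ (n + 2)) zp)) := by
        gcongr
        exact hconn.dist_triangle
      _ = L + Γ.dist v ((φ ^ n) v') + L := by rw [hm v hv, hmid, hlast, add_assoc]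
  linarith

theorem IsAxialClique.of_superset (hconn : Γ.Connected) {C ρ : Set V}
    (hC : IsAxialClique Γ φ L C) (hρ : Γ.IsClique ρ) (hCρ : C ⊆ ρ)
    (hprev : TransDist Γ ρ (⇑φ⁻¹ '' C) L) (hnext : TransDist Γ ρ (φ '' C) L) :
    IsAxialClique Γ φ L ρ := by
  obtain ⟨_, ⟨zm, hzm, rfl⟩, hm⟩ := hprev.2.2
  replace hm : ∀ v ∈ ρ, Γ.dist zm (φ v) = L := fun v hv => by
    rw [Γ.dist_comm, ← hm v hv, ← SimpleGraph.Iso.dist_eq φ v, RelIso.apply_inv_self]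
  obtain ⟨_, ⟨zp, hzp, rfl⟩, hp⟩ := hnext.2.2
  refine ⟨hρ, hC.2.1.mono hCρ, fun n hn => ?_⟩
  obtain ⟨n, rfl⟩ : ∃ k, n = k + 1 := ⟨n - 1, by omega⟩
  have hlow := fun {v v'} (hv : v ∈ ρ) (hv' : v' ∈ ρ) =>
    hC.le_dist_pow hconn hzm hzp hm hp (n + 1) hv hv'
  refine ⟨?_, ⟨zm, hCρ hzm, ?_⟩, ⟨(φ ^ (n + 1)) zp, ⟨zp, hCρ hzp, rfl⟩, fun v hv => ?_⟩⟩
  · rintro v hv _ ⟨v', hv', rfl⟩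
    exact hlow hv hv'
  · rintro _ ⟨v, hv, rfl⟩
    exact le_antisymm (dist_pow_succ_le_of_dist_apply_eq hconn (hCρ hzm) hm n hv)
      (hlow (hCρ hzm) hv)
  · exact le_antisymm (dist_le_pow_succ_of_dist_apply_eq hconn (hCρ hzp) hp n hv)
      (hlow hv (hCρ hzp))

end AxialClique

section Orbit

variable {V : Type*} {Γ : SimpleGraph V} {φ : Γ ≃g Γ} {L : ℕ} {C : Set V}

theorem IsAxialClique.transDist_zpow (hC : IsAxialClique Γ φ L C) {k m : ℤ} (hkm : k ≠ m) :
    TransDist Γ ((φ ^ k) '' C) ((φ ^ m) '' C) ((k - m).natAbs * L) := by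
  wlog hlt : k < m generalizing k m
  · rw [show (k - m).natAbs = (m - k).natAbs by omega]
    exact (this hkm.symm (by omega)).symm
  obtain ⟨n, hn, rfl⟩ : ∃ n : ℕ, 0 < n ∧ m = k + n := ⟨(m - k).toNat, by omega, by omega⟩
  have h := (hC.2.2 n hn).image (φ ^ k)
  rw [← zpow_natCast, image_zpow_image] at h
  rwa [show (k - (k + n)).natAbs = n by omega]

theorem eq_zpow_image_of_maximal_isAxialClique (hconn : Γ.Connected) {x : V}
    (hC : Maximal (fun C => x ∈ C ∧ IsAxialClique Γ φ L C) C) (k : ℤ) {ρ : Set V}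
    (hρ : Γ.IsClique ρ) (hCρ : (φ ^ k) '' C ⊆ ρ)
    (hprev : TransDist Γ ρ ((φ ^ (k - 1)) '' C) L)
    (hnext : TransDist Γ ρ ((φ ^ (k + 1)) '' C) L) :
    ρ = (φ ^ k) '' C := by
  have hCρ' : C ⊆ (φ ^ (-k)) '' ρ := by
    have h := Set.image_mono (f := ⇑(φ ^ (-k))) hCρ
    rwa [image_zpow_image, neg_add_cancel, zpow_zero, RelIso.coe_one, Set.image_id] at h
  have hprev' := hprev.image (φ ^ (-k))
  have hnext' := hnext.image (φ ^ (-k))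
  rw [image_zpow_image, show -k + (k - 1) = -1 by ring, zpow_neg_one] at hprev'
  rw [image_zpow_image, show -k + (k + 1) = 1 by ring, zpow_one] at hnext'
  have hρ' : IsAxialClique Γ φ L ((φ ^ (-k)) '' ρ) :=
    hC.prop.2.of_superset hconn (hρ.image_iso _) hCρ' hprev' hnext'
  rw [← hC.eq_of_ge ⟨hCρ' hC.prop.1, hρ'⟩ hCρ', image_zpow_image]
  simp

theorem exists_isCliquePathZ_image_eq (hconn : Γ.Connected)
    (hlf : ∀ v : V, (Γ.neighborSet v).Finite) (hL : 0 < L) {x : V}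
    (hx : ∀ n : ℕ, Γ.dist x ((φ ^ n) x) = n * L) :
    ∃ σ : ℤ → Set V, IsCliquePathZ Γ L σ ∧ ∀ n : ℤ, φ '' σ n = σ (n + 1) := by
  obtain ⟨C, hC⟩ : ∃ C, Maximal (fun C => x ∈ C ∧ IsAxialClique Γ φ L C) C :=
    Set.Finite.exists_maximal ((Γ.finite_setOf_isClique_mem (hlf x)).subset
      fun C hC => ⟨hC.1, hC.2.1⟩) ⟨{x}, rfl, isAxialClique_singleton hx⟩
  have hCax := hC.prop.2
  refine ⟨fun k => (φ ^ k) '' C, ⟨fun k => ⟨hCax.1.image_iso _, hCax.2.1.image _⟩,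
    fun k m hkm => (hCax.transDist_zpow hkm).disjoint ?_, fun k m hkm => hCax.transDist_zpow hkm,
    fun k ρ hρ => eq_zpow_image_of_maximal_isAxialClique hconn hC k hρ⟩, fun k => ?_⟩
  · exact Nat.mul_pos (Int.natAbs_pos.mpr (sub_ne_zero.mpr hkm)) hL
  · simp only [add_comm k, ← image_zpow_image, zpow_one]

end Orbit

theorem hyperbolic_invariant_clique_path_general {V : Type*} (Γ : SimpleGraph V)
    (hΓ : IsHellyGraph Γ) (hlf : ∀ v : V, (Γ.neighborSet v).Finite)
    (g : Equiv.Perm V) (hg : ∀ u v : V, Γ.Adj (g u) (g v) ↔ Γ.Adj u v)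
    (a L : ℕ) (hL : 1 ≤ L) (x : V)
    (hx : ∀ n : ℕ, Γ.dist x ((g ^ (a * n)) x) = n * L) :
    ∃ σ : ℤ → Set V, IsCliquePathZ Γ L σ ∧
      ∀ n : ℤ, (g ^ a) '' σ n = σ (n + 1) := by
  let ψ : Γ ≃g Γ := ⟨g, hg _ _⟩
  have hψ : ∀ n : ℕ, ⇑(ψ ^ n) = ⇑(g ^ n) := ψ.coe_pow
  obtain ⟨σ, hσ, hinv⟩ := exists_isCliquePathZ_image_eq (φ := ψ ^ a) hΓ.1 hlf hL
    (x := x) (by simpa only [← pow_mul, hψ] using hx)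
  exact ⟨σ, hσ, by simpa only [hψ] using hinv⟩

/-- A hyperbolic automorphism (one translating some vertex with linear speed
along powers of `g ^ a`) of a locally finite Helly graph admits an invariant
bi-infinite `L`-clique-path. -/
theorem hyperbolic_invariant_clique_path {V : Type*} (Γ : SimpleGraph V)
    (hΓ : IsHellyGraph Γ) (hlf : ∀ v : V, (Γ.neighborSet v).Finite)
    (g : Equiv.Perm V) (hg : ∀ u v : V, Γ.Adj (g u) (g v) ↔ Γ.Adj u v)
    (a L : ℕ) (ha : 1 ≤ a) (hL : 1 ≤ L) (x : V)
    (hx : ∀ n : ℕ, Γ.dist x ((g ^ (a * n)) x) = n * L) :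
    ∃ σ : ℤ → Set V, IsCliquePathZ Γ L σ ∧
      ∀ n : ℤ, (g ^ a) '' σ n = σ (n + 1) :=
  hyperbolic_invariant_clique_path_general Γ hΓ hlf g hg a L hL x hx
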